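/- Unit propagation decides Horn satisfiability: a Horn CNF formula F is unsatisfiable if and only if the empty clause is derivable from F using only unit resolution (resolution steps in which at least one premise is a unit clause). -/

import Mathlib

inductive Lit where
  | pos : ℕ → Lit
  | neg : ℕ → Lit
deriving DecidableEq

def Lit.var : Lit → ℕ
  | .pos n => n
  | .neg n => n

def Lit.isPos : Lit → Bool
  | .pos _ => true
  | .neg _ => false

def Lit.compl : Lit → Lit
  | .pos n => .neg n
  | .neg n => .pos n

abbrev Clause := Finset Lit

def Lit.eval (v : ℕ → Bool) : Lit → Bool
  | .pos n => v n
  | .neg n => !v n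

def Clause.sat (v : ℕ → Bool) (C : Clause) : Prop := ∃ l ∈ C, Lit.eval v l = true

abbrev CNF := Finset Clause

def CNF.sat (v : ℕ → Bool) (F : CNF) : Prop := ∀ C ∈ F, Clause.sat v C

def CNF.satisfiable (F : CNF) : Prop := ∃ v, CNF.sat v F

def Clause.isTauto (C : Clause) : Prop := ∃ n, Lit.pos n ∈ C ∧ Lit.neg n ∈ C

def Clause.isHorn (C : Clause) : Prop := (C.filter (fun l => Lit.isPos l = true)).card ≤ 1

def Clause.resolvent (C D : Clause) (x : ℕ) : Clause :=
  (C.erase (.pos x)) ∪ (D.erase (.neg x))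

/-- Derivability from `F` using unit resolution only: a unit clause `{l}` is
resolved with a clause containing the complementary literal, which is removed. -/
inductive UnitDeriv (F : CNF) : Clause → Prop
  | base {C : Clause} : C ∈ F → UnitDeriv F C
  | step {l : Lit} {C : Clause} :
      UnitDeriv F {l} → UnitDeriv F C → Lit.compl l ∈ C →
      UnitDeriv F (C.erase (Lit.compl l))

/-!
Unit resolution is sound, so a derivation of `∅` rules out every model. Conversely, if `∅` is
not derivable, set a variable `n` true exactly when the unit clause `{pos n}` is derivable. A
clause of `F` falsified by this assignment has all its negative literals `neg n` resolvable
against derivable units `{pos n}`, leaving a derivable clause made of its positive literals.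
For a Horn clause this is `∅`, which is excluded, or a unit `{pos m}`, which makes `m` true and
so satisfies the clause after all.
-/

lemma Lit.compl_compl (l : Lit) : l.compl.compl = l := by
  cases l <;> rfl

lemma Lit.eval_compl (v : ℕ → Bool) (l : Lit) : l.compl.eval v = !l.eval v := by
  cases l <;> simp [Lit.compl, Lit.eval]

namespace UnitDeriv

variable {F : CNF}

theorem sat {C : Clause} (h : UnitDeriv F C) {v : ℕ → Bool} (hv : CNF.sat v F) :
    Clause.sat v C := by
  induction h with
  | base hC => exact hv _ hC
  | step _ _ _ ih_unit ih =>
    obtain ⟨l', hl', hl'v⟩ := ih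
    obtain ⟨_, hl, hlv⟩ := ih_unit
    rw [Finset.mem_singleton] at hl
    subst hl
    refine ⟨l', Finset.mem_erase.mpr ⟨?_, hl'⟩, hl'v⟩
    rintro rfl
    simp [Lit.eval_compl, hlv] at hl'v

theorem not_satisfiable (h : UnitDeriv F ∅) : ¬ CNF.satisfiable F := fun ⟨_, hv⟩ ↦ by
  simpa [Clause.sat] using h.sat hv

theorem sdiff {C : Clause} (hC : UnitDeriv F C) (S : Finset Lit)
    (hS : ∀ l ∈ S, UnitDeriv F {l.compl}) : UnitDeriv F (C \ S) := by
  induction S using Finset.induction_on with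
  | empty => simpa using hC
  | @insert a S _ ih =>
    rw [Finset.sdiff_insert]
    have hCS := ih fun l hl ↦ hS l (Finset.mem_insert_of_mem hl)
    by_cases ha : a ∈ C \ S
    · simpa [Lit.compl_compl] using
        step (hS a (Finset.mem_insert_self a S)) hCS (by rwa [Lit.compl_compl])
    · rwa [Finset.erase_eq_of_notMem ha]

theorem filter_isPos {C : Clause} (hC : UnitDeriv F C)
    (hneg : ∀ n, Lit.neg n ∈ C → UnitDeriv F {Lit.pos n}) :
    UnitDeriv F (C.filter fun l ↦ l.isPos = true) := by
  have hdiff := hC.sdiff (C.filter fun l ↦ l.isPos = false) fun l hl ↦ by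
    obtain ⟨hlC, hl⟩ := Finset.mem_filter.mp hl
    cases l with
    | pos n => simp [Lit.isPos] at hl
    | neg n => exact hneg n hlC
  convert hdiff using 1
  ext l
  simp +contextual

end UnitDeriv

noncomputable def unitModel (F : CNF) : ℕ → Bool :=
  open Classical in fun n ↦ decide (UnitDeriv F {Lit.pos n})

theorem sat_unitModel {F : CNF} (hHorn : ∀ C ∈ F, Clause.isHorn C) (hF : ¬ UnitDeriv F ∅) :
    CNF.sat (unitModel F) F := by
  intro C hC
  by_contra hCsat
  have hneg : ∀ n, Lit.neg n ∈ C → UnitDeriv F {Lit.pos n} := fun n hn ↦ by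
    by_contra h
    exact hCsat ⟨_, hn, by simp [Lit.eval, unitModel, h]⟩
  have hpos := (UnitDeriv.base hC).filter_isPos hneg
  rcases (C.filter fun l ↦ l.isPos = true).eq_empty_or_nonempty with hempty | ⟨m, hm⟩
  · exact hF (hempty ▸ hpos)
  · have hsingle : (C.filter fun l ↦ l.isPos = true) = {m} :=
      Finset.eq_singleton_iff_unique_mem.mpr
        ⟨hm, fun l hl ↦ Finset.card_le_one.mp (hHorn C hC) l hl m hm⟩
    obtain ⟨hmC, hmpos⟩ := Finset.mem_filter.mp hm
    cases m with
    | neg n => simp [Lit.isPos] at hmpos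
    | pos n => exact hCsat ⟨_, hmC, by simpa [Lit.eval, unitModel, hsingle] using hpos⟩

theorem stmt_7 (F : CNF) (hHorn : ∀ C ∈ F, Clause.isHorn C) :
    ¬ CNF.satisfiable F ↔ UnitDeriv F ∅ := by
  refine ⟨fun hunsat ↦ ?_, UnitDeriv.not_satisfiable⟩
  by_contra hF
  exact hunsat ⟨unitModel F, sat_unitModel hHorn hF⟩
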